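/- Define f(x) = 1/(4(1-x)^3) for x ∈ [0, 2/3] and f(x) = 0 for x ∈ (2/3, 1], and define the two-player payoff G₁(x₁,x₂) = −1 + 2x₂ − x₁x₂ if x₁ < x₂, G₁(x₁,x₂) = 1 − 2x₁ + x₁x₂ if x₁ > x₂, and G₁(x₁,x₁) = 0. Then ∫_0^1 G₁(x₁,x₂) f(x₂) dx₂ = 0 for every x₁ ∈ [0, 2/3], and ∫_0^1 G₁(x₁,x₂) f(x₂) dx₂ < 0 for every x₁ ∈ (2/3, 1]; hence f is a symmetric mixed-strategy Nash equilibrium of Dresher's two-player game. -/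

import Mathlib

open Real MeasureTheory

/-- Dresher's two-player Nash-equilibrium density:
`f(x) = 1/(4(1-x)³)` for `x ≤ 2/3`, and `0` above `2/3`. -/
noncomputable def fDresher (x : ℝ) : ℝ :=
  if x ≤ 2/3 then 1/(4*(1-x)^3) else 0

/-- The payoff of player 1 in Dresher's two-player game, averaged over the
eliminations: `G₁(x₁,x₂) = -1 + 2x₂ - x₁x₂` for `x₁ < x₂`,
`G₁(x₁,x₂) = 1 - 2x₁ + x₁x₂` for `x₁ > x₂`, and `0` on the diagonal. -/
noncomputable def G1 (x₁ x₂ : ℝ) : ℝ :=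
  if x₁ < x₂ then -1 + 2*x₂ - x₁*x₂
  else if x₂ < x₁ then 1 - 2*x₁ + x₁*x₂
  else 0

/-!
Below `2/3`, on either side of the diagonal, `G₁(x₁, x) f(x)` is a rational function
`(p - q (1 - x)) / (4 (1 - x)³)` with an elementary primitive. Splitting `[0, 1]` at `x₁` and
`2/3`, the payoff integral is `0` for `x₁ ≤ 2/3` and `1 - 3x₁/2` for `x₁ > 2/3`.
-/

open Set

namespace Dresher

noncomputable def branch (p q x : ℝ) : ℝ := (p - q * (1 - x)) / (4 * (1 - x) ^ 3)

noncomputable def primitive (p q x : ℝ) : ℝ := p / (8 * (1 - x) ^ 2) - q / (4 * (1 - x))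

variable {p q a b x x₁ : ℝ}

lemma hasDerivAt_primitive (hx : x ≠ 1) :
    HasDerivAt (primitive p q) (branch p q x) x := by
  have hx' : 1 - x ≠ 0 := sub_ne_zero.mpr hx.symm
  have hsub : HasDerivAt (fun y : ℝ => 1 - y) (-1) x := by
    simpa using (hasDerivAt_id x).const_sub 1
  have hsq : HasDerivAt (fun y : ℝ => 8 * (1 - y) ^ 2) (8 * ((2 : ℕ) * (1 - x) ^ 1 * -1)) x :=
    (hsub.pow 2).const_mul 8
  replace hsq := (hasDerivAt_const x p).div hsq (by positivity)
  have hlin := (hasDerivAt_const x q).div (hsub.const_mul 4) (by positivity)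
  refine (hsq.sub hlin).congr_deriv ?_
  simp only [branch]
  field_simp
  ring

lemma continuousOn_branch (h : (1 : ℝ) ∉ uIcc a b) : ContinuousOn (branch p q) (uIcc a b) := by
  refine ContinuousOn.div (by fun_prop) (by fun_prop) fun x hx => ?_
  have : 1 - x ≠ 0 := sub_ne_zero.mpr fun h1 => h (h1 ▸ hx)
  positivity

lemma integral_branch (h : (1 : ℝ) ∉ uIcc a b) :
    ∫ x in a..b, branch p q x = primitive p q b - primitive p q a :=
  intervalIntegral.integral_eq_sub_of_hasDerivAt
    (fun _ hx => hasDerivAt_primitive fun h1 => h (h1 ▸ hx))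
    (continuousOn_branch h).intervalIntegrable

lemma not_one_mem_uIcc (hab : a ≤ b) (hb : b < 1) : (1 : ℝ) ∉ uIcc a b := by
  rw [uIcc_of_le hab]
  exact fun h => hb.not_ge h.2

lemma intervalIntegrable_of_eqOn_branch {f : ℝ → ℝ} (hab : a ≤ b) (hb : b < 1)
    (h : EqOn f (branch p q) (Ioo a b)) : IntervalIntegrable f volume a b :=
  ((continuousOn_branch (not_one_mem_uIcc hab hb)).intervalIntegrable).congr_uIoo
    (uIoo_of_le hab ▸ h.symm)

lemma integral_of_eqOn_branch {f : ℝ → ℝ} (hab : a ≤ b) (hb : b < 1)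
    (h : EqOn f (branch p q) (Ioo a b)) :
    ∫ x in a..b, f x = primitive p q b - primitive p q a := by
  rw [intervalIntegral.integral_congr_Ioo_of_le hab h, integral_branch (not_one_mem_uIcc hab hb)]

lemma G1_mul_fDresher_of_lt (h : x < x₁) (hx : x ≤ 2/3) :
    G1 x₁ x * fDresher x = branch (1 - x₁) x₁ x := by
  rw [G1, fDresher, if_neg h.not_gt, if_pos h, if_pos hx, branch]
  ring

lemma G1_mul_fDresher_of_gt (h : x₁ < x) (hx : x ≤ 2/3) :
    G1 x₁ x * fDresher x = branch (1 - x₁) (2 - x₁) x := by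
  rw [G1, fDresher, if_pos h, if_pos hx, branch]
  ring

lemma G1_mul_fDresher_of_two_thirds_lt (hx : 2/3 < x) : G1 x₁ x * fDresher x = 0 := by
  rw [fDresher, if_neg hx.not_ge, mul_zero]

lemma eqOn_zero_Ioo_two_thirds_one :
    EqOn (fun x => G1 x₁ x * fDresher x) 0 (Ioo (2/3) 1) :=
  fun _ hx => G1_mul_fDresher_of_two_thirds_lt hx.1

lemma intervalIntegrable_two_thirds_one :
    IntervalIntegrable (fun x => G1 x₁ x * fDresher x) volume (2/3) 1 :=
  intervalIntegrable_const.congr_uIoo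
    (uIoo_of_le (by norm_num : (2/3 : ℝ) ≤ 1) ▸ eqOn_zero_Ioo_two_thirds_one.symm)

lemma integral_G1_mul_fDresher_of_le (h0 : 0 ≤ x₁) (h : x₁ ≤ 2/3) :
    ∫ x in (0:ℝ)..1, G1 x₁ x * fDresher x = 0 := by
  have hx₁ : x₁ < 1 := by linarith
  have hlt : EqOn (fun x => G1 x₁ x * fDresher x) (branch (1 - x₁) x₁) (Ioo 0 x₁) :=
    fun _ hx => G1_mul_fDresher_of_lt hx.2 (by linarith [hx.2])
  have hgt : EqOn (fun x => G1 x₁ x * fDresher x) (branch (1 - x₁) (2 - x₁)) (Ioo x₁ (2/3)) :=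
    fun _ hx => G1_mul_fDresher_of_gt hx.1 hx.2.le
  have hI₁ := intervalIntegrable_of_eqOn_branch h0 hx₁ hlt
  have hI₂ := intervalIntegrable_of_eqOn_branch h (by norm_num) hgt
  have hI₃ := intervalIntegrable_two_thirds_one (x₁ := x₁)
  rw [← intervalIntegral.integral_add_adjacent_intervals (hI₁.trans hI₂) hI₃,
    ← intervalIntegral.integral_add_adjacent_intervals hI₁ hI₂,
    integral_of_eqOn_branch h0 hx₁ hlt, integral_of_eqOn_branch h (by norm_num) hgt,
    intervalIntegral.integral_congr_Ioo_of_le (by norm_num) eqOn_zero_Ioo_two_thirds_one]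
  have : 1 - x₁ ≠ 0 := by linarith
  simp only [primitive, Pi.zero_apply, intervalIntegral.integral_zero]
  field_simp
  ring

lemma integral_G1_mul_fDresher_of_two_thirds_lt (h : 2/3 < x₁) :
    ∫ x in (0:ℝ)..1, G1 x₁ x * fDresher x = 1 - 3/2 * x₁ := by
  have hlt : EqOn (fun x => G1 x₁ x * fDresher x) (branch (1 - x₁) x₁) (Ioo 0 (2/3)) :=
    fun _ hx => G1_mul_fDresher_of_lt (by linarith [hx.2]) hx.2.le
  have hI₁ := intervalIntegrable_of_eqOn_branch (by norm_num) (by norm_num) hlt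
  have hI₂ := intervalIntegrable_two_thirds_one (x₁ := x₁)
  rw [← intervalIntegral.integral_add_adjacent_intervals hI₁ hI₂,
    integral_of_eqOn_branch (by norm_num) (by norm_num) hlt,
    intervalIntegral.integral_congr_Ioo_of_le (by norm_num) eqOn_zero_Ioo_two_thirds_one]
  simp only [primitive, Pi.zero_apply, intervalIntegral.integral_zero]
  ring

end Dresher

open Dresher in
/-- `∫_0^1 G₁(x₁,x₂) f(x₂) dx₂ = 0` for every `x₁ ∈ [0, 2/3]`,
and `∫_0^1 G₁(x₁,x₂) f(x₂) dx₂ < 0` for every `x₁ ∈ (2/3, 1]`; hence `f` is a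
symmetric mixed-strategy Nash equilibrium of Dresher's two-player game. -/
theorem dresher_nash_equilibrium :
    (∀ x₁ ∈ Set.Icc (0:ℝ) (2/3),
      ∫ x₂ in (0:ℝ)..1, G1 x₁ x₂ * fDresher x₂ = 0) ∧
    (∀ x₁ ∈ Set.Ioc (2/3:ℝ) 1,
      ∫ x₂ in (0:ℝ)..1, G1 x₁ x₂ * fDresher x₂ < 0) := by
  refine ⟨fun x₁ hx₁ => integral_G1_mul_fDresher_of_le hx₁.1 hx₁.2, fun x₁ hx₁ => ?_⟩
  rw [integral_G1_mul_fDresher_of_two_thirds_lt hx₁.1]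
  linarith [hx₁.1]
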